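/- arXiv:2207.12386 — 2 statements merged into one kernel-verified Lean document; each statement's English description precedes it below -/
import Mathlib

section
/- Consider the three-qubit depolarizing correlated channel N(ρ) = Σ_{α,β,γ ∈ {0,1,2,3}} p_{αβγ} (σ_α ⊗ σ_β ⊗ σ_γ) ρ (σ_α ⊗ σ_β ⊗ σ_γ), where p_{αβγ} = p_α p_{β|α} p_{γ|β}, p_{β|α} = (1−μ) p_β + μ δ_{αβ}, and the single-qubit probability vector is p_0 = 1 − 3q/4, p_1 = p_2 = p_3 = q/4, with parameters q, μ ∈ [0,1]. Then Tr[(σ_z ⊗ σ_z ⊗ σ_z) N(σ_z ⊗ σ_z ⊗ σ_z)] = 8 (1−q)(1 + (μ−1)²(q−2)q); equivalently, the depolarizing deconvolution factor is f_3(q,μ) = 1/((1−q)(1 + (μ−1)²(q−2)q)). -/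
open Matrix Kronecker

/-- The single-qubit Pauli matrices `σ₀ = I₂, σ₁ = X, σ₂ = Y, σ₃ = Z`. -/
def pauli : Fin 4 → Matrix (Fin 2) (Fin 2) ℂ
  | 0 => 1
  | 1 => !![0, 1; 1, 0]
  | 2 => !![0, -Complex.I; Complex.I, 0]
  | 3 => !![1, 0; 0, -1]

/-- The single-qubit depolarizing probability vector
`p⃗ = [1 - 3q/4, q/4, q/4, q/4]`. -/
noncomputable def depoProb (q : ℝ) : Fin 4 → ℝ
  | 0 => 1 - 3 * q / 4
  | _ => q / 4

/-- The Markov-chain conditional probability `p_{β|α} = (1-μ) p_β + μ δ_{αβ}`. -/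
def condProb (q : Fin 4 → ℝ) (μ : ℝ) (α β : Fin 4) : ℝ :=
  (1 - μ) * q β + if α = β then μ else 0

/-- The three-qubit correlated Pauli channel with single-qubit probability
vector `q` and correlation parameter `μ`:
`N(ρ) = ∑_{α,β,γ} q_α p_{β|α} p_{γ|β} (σ_α ⊗ σ_β ⊗ σ_γ) ρ (σ_α ⊗ σ_β ⊗ σ_γ)`. -/
noncomputable def correlatedChannel3 (q : Fin 4 → ℝ) (μ : ℝ)
    (ρ : Matrix ((Fin 2 × Fin 2) × Fin 2) ((Fin 2 × Fin 2) × Fin 2) ℂ) :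
    Matrix ((Fin 2 × Fin 2) × Fin 2) ((Fin 2 × Fin 2) × Fin 2) ℂ :=
  ∑ α : Fin 4, ∑ β : Fin 4, ∑ γ : Fin 4,
    ((q α * condProb q μ α β * condProb q μ β γ : ℝ) : ℂ) •
      (((pauli α ⊗ₖ pauli β) ⊗ₖ pauli γ) * ρ * ((pauli α ⊗ₖ pauli β) ⊗ₖ pauli γ))

def psign : Fin 4 → ℂ
  | 0 => 2 | 1 => -2 | 2 => -2 | 3 => 2

lemma tr2 (α : Fin 4) : (pauli 3 * (pauli α * (pauli 3 * pauli α))).trace = psign α := by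
  fin_cases α <;>
    simp [pauli, psign, Matrix.trace_fin_two, Matrix.mul_apply, Fin.sum_univ_succ,
      Matrix.one_apply] <;> ring_nf

/-- for the three-qubit depolarizing correlated channel with
parameters `q, μ ∈ [0,1]`,
`Tr ((σ_z ⊗ σ_z ⊗ σ_z) N(σ_z ⊗ σ_z ⊗ σ_z)) = 8 (1-q)(1 + (μ-1)²(q-2)q)`;
equivalently the deconvolution factor is
`f₃(q,μ) = 1/((1-q)(1 + (μ-1)²(q-2)q))`. -/
theorem depolarizing_correlated_deconvolution_factor (q μ : ℝ)
    (hq : 0 ≤ q) (hq' : q ≤ 1) (hμ : 0 ≤ μ) (hμ' : μ ≤ 1) :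
    (((pauli 3 ⊗ₖ pauli 3) ⊗ₖ pauli 3) *
        correlatedChannel3 (depoProb q) μ ((pauli 3 ⊗ₖ pauli 3) ⊗ₖ pauli 3)).trace
      = 8 * (1 - (q : ℂ)) * (1 + ((μ : ℂ) - 1) ^ 2 * ((q : ℂ) - 2) * (q : ℂ)) := by
  have key : ∀ α β γ : Fin 4,
      (((pauli 3 ⊗ₖ pauli 3) ⊗ₖ pauli 3) *
        (((pauli α ⊗ₖ pauli β) ⊗ₖ pauli γ) * ((pauli 3 ⊗ₖ pauli 3) ⊗ₖ pauli 3) *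
          ((pauli α ⊗ₖ pauli β) ⊗ₖ pauli γ))).trace
        = psign α * psign β * psign γ := by
    intro α β γ
    rw [mul_assoc (((pauli α ⊗ₖ pauli β) ⊗ₖ pauli γ)),
      ← Matrix.mul_kronecker_mul, ← Matrix.mul_kronecker_mul,
      ← Matrix.mul_kronecker_mul, ← Matrix.mul_kronecker_mul,
      ← Matrix.mul_kronecker_mul, ← Matrix.mul_kronecker_mul,
      Matrix.trace_kronecker, Matrix.trace_kronecker, tr2, tr2, tr2]
  unfold correlatedChannel3
  rw [Matrix.mul_sum, Matrix.trace_sum]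
  simp only [Matrix.mul_sum, Matrix.trace_sum, Matrix.mul_smul, Matrix.trace_smul, key,
    smul_eq_mul]
  simp only [Fin.sum_univ_four]
  simp only [depoProb, condProb, psign]
  simp only [Fin.reduceEq, reduceIte, reduceCtorEq]
  norm_num
  push_cast
  ring
end

section
/- Consider the two-qubit amplitude damping correlated channel N(ρ) = (1−μ) Σ_{j=0}^{3} A_j ρ A_j† + μ Σ_{j=0}^{1} B_j ρ B_j†, with A_0 = E_0⊗E_0, A_1 = E_0⊗E_1, A_2 = E_1⊗E_0, A_3 = E_1⊗E_1, where E_0 = [[1,0],[0,√η]], E_1 = [[0,√(1−η)],[0,0]], B_0 = diag(1,1,1,√η), and B_1 the 4×4 matrix whose only nonzero entry is √(1−η) in position (1,4), for parameters η ∈ (0,1] and μ ∈ [0,1] with η + μ(1−η) ≠ 0. Then for every 4×4 Hermitian matrix ρ, writing ρ' = N(ρ) and g(η,μ) = 1/(η + μ(1−η))²: Tr[ρ (σ_z⊗σ_z)] = g(η,μ) [ (μ−1)²(η−1)² Tr[ρ] + Tr[ρ'(σ_z⊗σ_z)] − (μ−1)(η−1) Tr[ρ'(1⊗σ_z + σ_z⊗1)]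 ]. -/
open Matrix Kronecker

/-- The Pauli `z` matrix. -/
def sigmaZ : Matrix (Fin 2) (Fin 2) ℂ := !![1, 0; 0, -1]

/-- Amplitude damping Kraus operator `E₀ = [[1, 0], [0, √η]]`. -/
noncomputable def E0 (η : ℝ) : Matrix (Fin 2) (Fin 2) ℂ :=
  !![1, 0; 0, (Real.sqrt η : ℂ)]

/-- Amplitude damping Kraus operator `E₁ = [[0, √(1-η)], [0, 0]]`. -/
noncomputable def E1 (η : ℝ) : Matrix (Fin 2) (Fin 2) ℂ :=
  !![0, (Real.sqrt (1 - η) : ℂ); 0, 0]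

/-- Correlated (memoryful) Kraus operator `B₀ = diag(1, 1, 1, √η)`. -/
noncomputable def B0 (η : ℝ) : Matrix (Fin 2 × Fin 2) (Fin 2 × Fin 2) ℂ :=
  fun i j => if i = j then (if i = (1, 1) then (Real.sqrt η : ℂ) else 1) else 0

/-- Correlated (memoryful) Kraus operator `B₁`, whose only nonzero entry is
`√(1-η)` in position `(1, 4)` (i.e. row `|00⟩`, column `|11⟩`). -/
noncomputable def B1 (η : ℝ) : Matrix (Fin 2 × Fin 2) (Fin 2 × Fin 2) ℂ :=
  fun i j => if i = (0, 0) ∧ j = (1, 1) then (Real.sqrt (1 - η) : ℂ) else 0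

/-- The two-qubit amplitude damping correlated channel
`N(ρ) = (1-μ) ∑_{j=0}^{3} A_j ρ A_j† + μ ∑_{j=0}^{1} B_j ρ B_j†`, with
`A₀ = E₀⊗E₀`, `A₁ = E₀⊗E₁`, `A₂ = E₁⊗E₀`, `A₃ = E₁⊗E₁`. -/
noncomputable def ampDampChannel (η μ : ℝ)
    (ρ : Matrix (Fin 2 × Fin 2) (Fin 2 × Fin 2) ℂ) :
    Matrix (Fin 2 × Fin 2) (Fin 2 × Fin 2) ℂ :=
  ((1 - μ : ℝ) : ℂ) •
      ((E0 η ⊗ₖ E0 η) * ρ * (E0 η ⊗ₖ E0 η)ᴴ + (E0 η ⊗ₖ E1 η) * ρ * (E0 η ⊗ₖ E1 η)ᴴ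
        + (E1 η ⊗ₖ E0 η) * ρ * (E1 η ⊗ₖ E0 η)ᴴ + (E1 η ⊗ₖ E1 η) * ρ * (E1 η ⊗ₖ E1 η)ᴴ)
    + ((μ : ℝ) : ℂ) • (B0 η * ρ * (B0 η)ᴴ + B1 η * ρ * (B1 η)ᴴ)

set_option maxHeartbeats 2000000 in
/-- deconvolution of `σ_z ⊗ σ_z` for the two-qubit correlated
amplitude damping channel: for `η ∈ (0,1]`, `μ ∈ [0,1]` with `η + μ(1-η) ≠ 0`,
every Hermitian `ρ`, `ρ' = N(ρ)` and `g(η,μ) = 1/(η + μ(1-η))²`: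
`Tr (ρ (σ_z⊗σ_z)) = g(η,μ) [ (μ-1)²(η-1)² Tr ρ + Tr (ρ' (σ_z⊗σ_z))`
`− (μ-1)(η-1) Tr (ρ' (1⊗σ_z + σ_z⊗1)) ]`. -/
theorem ampDamp_correlated_deconvolution (η μ : ℝ)
    (hη : 0 < η) (hη' : η ≤ 1) (hμ : 0 ≤ μ) (hμ' : μ ≤ 1)
    (hinv : η + μ * (1 - η) ≠ 0)
    (ρ : Matrix (Fin 2 × Fin 2) (Fin 2 × Fin 2) ℂ) (hρ : ρ.IsHermitian) :
    (ρ * (sigmaZ ⊗ₖ sigmaZ)).trace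
      = ((1 / (η + μ * (1 - η)) ^ 2 : ℝ) : ℂ) *
          ((((μ - 1) ^ 2 * (η - 1) ^ 2 : ℝ) : ℂ) * ρ.trace
            + (ampDampChannel η μ ρ * (sigmaZ ⊗ₖ sigmaZ)).trace
            - (((μ - 1) * (η - 1) : ℝ) : ℂ) *
                (ampDampChannel η μ ρ *
                  ((1 : Matrix (Fin 2) (Fin 2) ℂ) ⊗ₖ sigmaZ
                    + sigmaZ ⊗ₖ (1 : Matrix (Fin 2) (Fin 2) ℂ))).trace) := by
  have ha : ((Real.sqrt η : ℂ))^2 = (η : ℂ) := by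
    rw [← Complex.ofReal_pow, Real.sq_sqrt hη.le]
  have hb : ((Real.sqrt (1-η) : ℂ))^2 = ((1-η : ℝ) : ℂ) := by
    rw [← Complex.ofReal_pow, Real.sq_sqrt (by linarith)]
  simp only [ampDampChannel, sigmaZ, E0, E1, B0, B1, Matrix.trace, Matrix.diag,
    Matrix.mul_apply, Matrix.add_apply, Matrix.smul_apply, Matrix.conjTranspose_apply,
    Matrix.kroneckerMap_apply, Matrix.one_apply, Fintype.sum_prod_type, Fin.sum_univ_two,
    Matrix.cons_val', Matrix.cons_val_zero, Matrix.cons_val_one, Matrix.head_cons,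
    Matrix.head_fin_const, Matrix.empty_val', Matrix.cons_val_fin_one, smul_eq_mul,
    Complex.conj_ofReal, Prod.mk.injEq, star_one, star_zero]
  norm_num [Complex.conj_ofReal]
  set a := ((Real.sqrt η : ℂ)) with haa
  set b := ((Real.sqrt (1-η) : ℂ)) with hbb
  push_cast at ha hb ⊢
  rw [show (η:ℂ) = a^2 from ha.symm] at hb ⊢
  have hd : a^2 + (μ:ℂ) * (1 - a^2) ≠ 0 := by
    rw [ha]
    intro h
    apply hinv
    have : ((η + μ * (1 - η) : ℝ) : ℂ) = 0 := by push_cast; linear_combination h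
    exact_mod_cast this
  have hb4 : b^4 = (1 - a^2)^2 := by rw [show b^4 = (b^2)^2 by ring, hb]
  field_simp
  ring_nf
  simp only [show b^2 = 1-a^2 from hb, hb4]
  ring
end
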